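/- Let X, Z be finite sets with symmetric non-negative functions, f : X → Z a bijection, and ε > 0 such that |d_X(x,y) − d_Z(f(x), f(y))| < ε for all x, y ∈ X. Then M_f(a,b) = 0 whenever |a − b| > ε, where M_f is the induced block function. -/

import Mathlib

open scoped NNReal
open Module

/-- 1-skeleton of the Vietoris–Rips filtration of `(Z, d)`: edgeless at `r = 0`;
for `r > 0` it has an edge between distinct points at distance at most `r`.
(The adjacency is symmetrized; for symmetric `d` this agrees with the usual definition.) -/
def VR {Z : Type*} (d : Z → Z → ℝ≥0) (r : ℝ≥0) : SimpleGraph Z where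
  Adj z z' := z ≠ z' ∧ 0 < r ∧ d z z' ≤ r ∧ d z' z ≤ r
  symm := by constructor; intro z z' h; exact ⟨h.1.symm, h.2.1, h.2.2.2, h.2.2.1⟩
  loopless := by constructor; intro z h; exact h.1 rfl

/-- "Closed" Vietoris–Rips graph, used for `ker⁺`: at `r = 0` it has the edges between
distinct points at distance `0`; for `r > 0` it coincides with `VR d r`. -/
def VRc {Z : Type*} (d : Z → Z → ℝ≥0) (r : ℝ≥0) : SimpleGraph Z where
  Adj z z' := z ≠ z' ∧ d z z' ≤ r ∧ d z' z ≤ r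
  symm := by constructor; intro z z' h; exact ⟨h.1.symm, h.2.2, h.2.1⟩
  loopless := by constructor; intro z h; exact h.1 rfl

lemma VR_mono {Z : Type*} (d : Z → Z → ℝ≥0) {r s : ℝ≥0} (hrs : r ≤ s) :
    VR d r ≤ VR d s := by
  intro a b hab
  exact ⟨hab.1, hab.2.1.trans_le hrs, hab.2.2.1.trans hrs, hab.2.2.2.trans hrs⟩

/-- The structure map `ρ` from `H₀` of the edgeless graph on `Z` (the free `𝔽₂`-vector
space on `Z`, identified with `Z → 𝔽₂`) to `H₀(G)` (the free `𝔽₂`-vector space on the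
connected components of `G`), summing the coefficients over each connected component. -/
noncomputable def rho {Z : Type*} [Fintype Z] (G : SimpleGraph Z) :
    (Z → ZMod 2) →ₗ[ZMod 2] (G.ConnectedComponent → ZMod 2) where
  toFun v c :=
    ∑ z ∈ @Finset.filter _ (fun z => G.connectedComponentMk z = c)
      (Classical.decPred _) Finset.univ, v z
  map_add' := by
    intro v w; funext c; simp [Finset.sum_add_distrib]
  map_smul' := by
    intro m v; funext c; simp [Finset.mul_sum]

/-- `ker (ρ_{0r})` for the (open) Vietoris–Rips graph `VR d r`. -/
noncomputable def kerVR {Z : Type*} [Fintype Z] (d : Z → Z → ℝ≥0) (r : ℝ≥0) :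
    Submodule (ZMod 2) (Z → ZMod 2) := LinearMap.ker (rho (VR d r))

/-- `ker⁺_b`: kernel of `ρ_{0b}`.  For `b > 0` this is `ker (ρ_{0b})` of `VR d b`;
at `b = 0` it is the span of the classes `[z_j] + [z_i]` with `d z_i z_j = 0`. -/
noncomputable def kerP {Z : Type*} [Fintype Z] (d : Z → Z → ℝ≥0) (b : ℝ≥0) :
    Submodule (ZMod 2) (Z → ZMod 2) := LinearMap.ker (rho (VRc d b))

/-- `ker⁻_b = ⋃_{0 ≤ r < b} ker (ρ_{0r})`, as a submodule (the union is increasing). -/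
noncomputable def kerM {Z : Type*} [Fintype Z] (d : Z → Z → ℝ≥0) (b : ℝ≥0) :
    Submodule (ZMod 2) (Z → ZMod 2) := ⨆ r : {r : ℝ≥0 // r < b}, kerVR d (r : ℝ≥0)

/-- Multiplicity of the death value `a` in the barcode: `m(a) = dim ker⁺_a − dim ker⁻_a`. -/
noncomputable def mult {Z : Type*} [Fintype Z] (d : Z → Z → ℝ≥0) (a : ℝ≥0) : ℕ :=
  finrank (ZMod 2) (kerP d a) - finrank (ZMod 2) (kerM d a)

/-- The induced block function `M_f(a,b)` for the identity relabelling bijection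
`f : (Fin n, dX) → (Fin n, dZ)`, `x_i ↦ z_i` (so that `f₀ = id` on `H₀(VR₀)`):
`dim ((f₀ ker⁺_a(X) ∩ ker⁺_b(Z)) / (f₀ ker⁻_a(X) ∩ ker⁺_b(Z) + f₀ ker⁺_a(X) ∩ ker⁻_b(Z)))`. -/
noncomputable def blockFn {Z : Type*} [Fintype Z] (dX dZ : Z → Z → ℝ≥0) (a b : ℝ≥0) : ℕ :=
  finrank (ZMod 2)
    ((↥(kerP dX a ⊓ kerP dZ b)) ⧸
      ((kerM dX a ⊓ kerP dZ b ⊔ kerP dX a ⊓ kerM dZ b).comap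
        (kerP dX a ⊓ kerP dZ b).subtype))

/-!
If `a + ε < b`, every edge of the closed Vietoris–Rips graph of `X` at scale `a` is an edge of
the Vietoris–Rips graph of `Z` at scale `a + ε < b`. Since `ρ` only sums coefficients over
connected components, enlarging the graph enlarges the kernel, so `ker⁺_a(X) ⊆ ker⁻_b(Z)` and the
numerator of `M_f(a, b)` already lies in its denominator. The case `b + ε < a` is symmetric.
-/

lemma VRc_le_VR_add {Z : Type*} {dX dZ : Z → Z → ℝ≥0} {ε : ℝ≥0}
    (h : ∀ x y, (dZ x y : ℝ) < dX x y + ε) (a : ℝ≥0) : VRc dX a ≤ VR dZ (a + ε) := by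
  have hlt : ∀ x y, dX x y ≤ a → dZ x y < a + ε := fun x y hxy => by
    have : (dX x y : ℝ) ≤ a := hxy
    exact_mod_cast (show (dZ x y : ℝ) < a + ε by linarith [h x y])
  rintro x y ⟨hne, hxy, hyx⟩
  exact ⟨hne, pos_of_gt (hlt x y hxy), (hlt x y hxy).le, (hlt y x hyx).le⟩

section Stability

variable {Z : Type*} [Fintype Z]

open SimpleGraph

open scoped Classical in
lemma rho_apply (G : SimpleGraph Z) (v : Z → ZMod 2) (c : G.ConnectedComponent) :
    rho G v c = ∑ z with G.connectedComponentMk z = c, v z :=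
  rfl

lemma ker_rho_mono {G G' : SimpleGraph Z} (hGG' : G ≤ G') :
    LinearMap.ker (rho G) ≤ LinearMap.ker (rho G') := by
  classical
  intro v hv
  rw [LinearMap.mem_ker] at hv ⊢
  funext c
  let φ := ConnectedComponent.map (Hom.ofLE hGG')
  have hfiber : ∀ C : G.ConnectedComponent, φ C = c →
      ∑ z with G'.connectedComponentMk z = c ∧ G.connectedComponentMk z = C, v z = 0 := by
    rintro C rfl
    refine (?_ : _ = rho G v C).trans (congrFun hv C)
    rw [rho_apply]
    refine Finset.sum_congr (Finset.filter_congr fun z _ => ?_) fun _ _ => rfl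
    constructor
    · exact And.right
    · rintro rfl
      exact ⟨(ConnectedComponent.map_mk (Hom.ofLE hGG') z).symm, rfl⟩
  -- the `G'`-component `c` is the disjoint union of the `G`-components that `φ` sends to `c`
  rw [rho_apply, Pi.zero_apply, ← Finset.sum_fiberwise_of_maps_to
    (t := Finset.univ.filter (φ · = c)) (g := G.connectedComponentMk) fun z hz => by
      simpa [φ] using hz]
  refine Finset.sum_eq_zero fun C hC => ?_
  rw [Finset.filter_filter]
  exact hfiber C (Finset.mem_filter.mp hC).2

lemma kerVR_le_kerM (d : Z → Z → ℝ≥0) {r b : ℝ≥0} (hrb : r < b) : kerVR d r ≤ kerM d b :=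
  le_iSup (fun s : {s : ℝ≥0 // s < b} => kerVR d s) ⟨r, hrb⟩

lemma kerP_le_kerM_of_add_lt {dX dZ : Z → Z → ℝ≥0} {ε a b : ℝ≥0}
    (h : ∀ x y, (dZ x y : ℝ) < dX x y + ε) (hab : a + ε < b) : kerP dX a ≤ kerM dZ b :=
  (ker_rho_mono (VRc_le_VR_add h a)).trans (kerVR_le_kerM dZ hab)

lemma blockFn_eq_zero_of_le (dX dZ : Z → Z → ℝ≥0) (a b : ℝ≥0)
    (hle : kerP dX a ⊓ kerP dZ b ≤ kerM dX a ⊓ kerP dZ b ⊔ kerP dX a ⊓ kerM dZ b) :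
    blockFn dX dZ a b = 0 := by
  have htop : (kerM dX a ⊓ kerP dZ b ⊔ kerP dX a ⊓ kerM dZ b).comap
      (kerP dX a ⊓ kerP dZ b).subtype = ⊤ := Submodule.comap_subtype_eq_top.mpr hle
  have := Submodule.Quotient.subsingleton_iff.mpr htop
  exact finrank_zero_of_subsingleton

lemma blockFn_eq_zero_of_kerP_le_kerM_left {dX dZ : Z → Z → ℝ≥0} {a b : ℝ≥0}
    (h : kerP dZ b ≤ kerM dX a) : blockFn dX dZ a b = 0 :=
  blockFn_eq_zero_of_le dX dZ a b fun _ hv => Submodule.mem_sup_left ⟨h hv.2, hv.2⟩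

lemma blockFn_eq_zero_of_kerP_le_kerM_right {dX dZ : Z → Z → ℝ≥0} {a b : ℝ≥0}
    (h : kerP dX a ≤ kerM dZ b) : blockFn dX dZ a b = 0 :=
  blockFn_eq_zero_of_le dX dZ a b fun _ hv => Submodule.mem_sup_right ⟨hv.1, h hv.1⟩

end Stability

theorem stmt10_general {n : ℕ} (dX dZ : Fin n → Fin n → ℝ≥0)
    (ε : ℝ≥0)
    (h : ∀ x y : Fin n, |(dX x y : ℝ) - (dZ x y : ℝ)| < ε)
    (a b : ℝ≥0) (hab : (ε : ℝ) < |(a : ℝ) - (b : ℝ)|) :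
    blockFn dX dZ a b = 0 := by
  have hXZ : ∀ x y, (dZ x y : ℝ) < dX x y + ε := fun x y => by
    linarith [(abs_sub_lt_iff.mp (h x y)).2]
  have hZX : ∀ x y, (dX x y : ℝ) < dZ x y + ε := fun x y => by
    linarith [(abs_sub_lt_iff.mp (h x y)).1]
  rcases lt_abs.mp hab with hba | hab
  · have hba : b + ε < a := by exact_mod_cast show (b : ℝ) + ε < a by linarith
    exact blockFn_eq_zero_of_kerP_le_kerM_left (kerP_le_kerM_of_add_lt hZX hba)
  · have hab : a + ε < b := by exact_mod_cast show (a : ℝ) + ε < b by linarith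
    exact blockFn_eq_zero_of_kerP_le_kerM_right (kerP_le_kerM_of_add_lt hXZ hab)

/-- if the bijection `f` (here the relabelling `x_i ↦ z_i`) satisfies
`|d_X(x,y) − d_Z(f x, f y)| < ε` for all `x, y`, then `M_f(a,b) = 0` whenever
`|a − b| > ε`. -/
theorem stmt10 {n : ℕ} (dX dZ : Fin n → Fin n → ℝ≥0)
    (hsX : ∀ i j, dX i j = dX j i) (hsZ : ∀ i j, dZ i j = dZ j i)
    (ε : ℝ≥0) (hε : 0 < ε)
    (h : ∀ x y : Fin n, |(dX x y : ℝ) - (dZ x y : ℝ)| < ε)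
    (a b : ℝ≥0) (hab : (ε : ℝ) < |(a : ℝ) - (b : ℝ)|) :
    blockFn dX dZ a b = 0 :=
  stmt10_general dX dZ ε h a b hab
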